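/- arXiv:1009.3994 — 4 statements merged into one kernel-verified Lean document; each statement's English description precedes it below -/
import Mathlib

section
/- For each t ∈ ℝ and (μ1, μ2) ∈ ℂ² with 1 + μ1 μ̄2 ≠ 0, the matrix γ(t) = (1/|1+μ1μ̄2|)·[[e^t + e^{-t}|μ1|², e^t μ2 - e^{-t} μ1],[e^t μ̄2 - e^{-t} μ̄1, e^t|μ2|² + e^{-t}]] is Hermitian, has determinant 1 and positive trace; hence t ↦ γ(t) is a curve in the Hermitian model of H³. -/
open Matrix

/-- The unit-speed geodesic in the Hermitian model of H³ with oriented-geodesic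
coordinates (μ1, μ2). -/
noncomputable def gammaGeo (μ1 μ2 : ℂ) (t : ℝ) : Matrix (Fin 2) (Fin 2) ℂ :=
  (1 / (‖1 + μ1 * star μ2‖ : ℂ)) •
    !![(Real.exp t : ℂ) + (Real.exp (-t) : ℂ) * (‖μ1‖^2 : ℝ),
       (Real.exp t : ℂ) * μ2 - (Real.exp (-t) : ℂ) * μ1;
       (Real.exp t : ℂ) * star μ2 - (Real.exp (-t) : ℂ) * star μ1,
       (Real.exp t : ℂ) * (‖μ2‖^2 : ℝ) + (Real.exp (-t) : ℂ)]

/-!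
Up to the positive factor `1 / |1 + μ1 μ̄2|`, `γ(t)` is `e^t v vᴴ + e^{-t} w wᴴ` with
`v = (1, μ̄2)` and `w = (μ1, -1)`. A positive combination of rank-one Hermitian matrices is
Hermitian with positive trace, and its determinant is
`e^t e^{-t} |det (v w)|² = |1 + μ1 μ̄2|²`.
-/

open Complex ComplexConjugate

theorem Matrix.isHermitian_of_fin_two {α : Type*} [InvolutiveStar α] {a d : α}
    (ha : IsSelfAdjoint a) (hd : IsSelfAdjoint d) (b : α) :
    !![a, b; star b, d].IsHermitian := by
  ext i j
  fin_cases i <;> fin_cases j <;> simp [ha.star_eq, hd.star_eq]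

noncomputable def geodesicNumerator (a b : ℝ) (μ1 μ2 : ℂ) : Matrix (Fin 2) (Fin 2) ℂ :=
  !![((a + b * ‖μ1‖ ^ 2 : ℝ) : ℂ), a * μ2 - b * μ1;
     conj (a * μ2 - b * μ1), ((a * ‖μ2‖ ^ 2 + b : ℝ) : ℂ)]

theorem geodesicNumerator_isHermitian (a b : ℝ) (μ1 μ2 : ℂ) :
    (geodesicNumerator a b μ1 μ2).IsHermitian :=
  isHermitian_of_fin_two (conj_ofReal _) (conj_ofReal _) _

theorem det_geodesicNumerator {a b : ℝ} (hab : a * b = 1) (μ1 μ2 : ℂ) :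
    (geodesicNumerator a b μ1 μ2).det = ((‖1 + μ1 * conj μ2‖ ^ 2 : ℝ) : ℂ) := by
  have hab' : (a : ℂ) * b = 1 := by exact_mod_cast hab
  rw [geodesicNumerator, det_fin_two_of]
  push_cast
  simp only [← mul_conj', map_sub, map_mul, map_add, map_one, conj_ofReal, conj_conj]
  linear_combination (1 + μ1 * conj μ2) * (1 + conj μ1 * μ2) * hab'

theorem trace_geodesicNumerator_re_pos {a b : ℝ} (ha : 0 < a) (hb : 0 < b) (μ1 μ2 : ℂ) :
    0 < (geodesicNumerator a b μ1 μ2).trace.re := by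
  rw [geodesicNumerator, trace_fin_two_of, ← ofReal_add, ofReal_re]
  positivity

theorem gammaGeo_eq_smul (μ1 μ2 : ℂ) (t : ℝ) :
    gammaGeo μ1 μ2 t = ((‖1 + μ1 * conj μ2‖⁻¹ : ℝ) : ℂ) •
      geodesicNumerator (Real.exp t) (Real.exp (-t)) μ1 μ2 := by
  rw [gammaGeo, geodesicNumerator, one_div, ofReal_inv]
  congr 1
  ext i j
  fin_cases i <;> fin_cases j <;> simp [-ofReal_exp]

theorem stmt_5 (μ1 μ2 : ℂ) (h : 1 + μ1 * star μ2 ≠ 0) (t : ℝ) :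
    (gammaGeo μ1 μ2 t)ᴴ = gammaGeo μ1 μ2 t ∧
    (gammaGeo μ1 μ2 t).det = 1 ∧
    0 < (gammaGeo μ1 μ2 t).trace.re := by
  have hw : ‖1 + μ1 * conj μ2‖ ^ 2 ≠ 0 := pow_ne_zero 2 (norm_ne_zero_iff.mpr h)
  have hexp : Real.exp t * Real.exp (-t) = 1 := by
    rw [← Real.exp_add, add_neg_cancel, Real.exp_zero]
  rw [gammaGeo_eq_smul]
  refine ⟨(geodesicNumerator_isHermitian _ _ _ _).smul (conj_ofReal _), ?_, ?_⟩
  · rw [det_smul, det_geodesicNumerator hexp, Fintype.card_fin, ← ofReal_pow, ← ofReal_mul,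
      inv_pow, inv_mul_cancel₀ hw, ofReal_one]
  · rw [trace_smul, smul_eq_mul, re_ofReal_mul]
    exact mul_pos (inv_pos.mpr (norm_pos_iff.mpr h))
      (trace_geodesicNumerator_re_pos (Real.exp_pos t) (Real.exp_pos (-t)) μ1 μ2)
end

section
/- The curve γ(t) from the previous parametrization is a unit-speed geodesic: with the Minkowski inner product ⟨X,Y⟩ = -(1/2)trace(X Ỹ) (Ỹ the cofactor matrix), one has ⟨γ'(t), γ'(t)⟩ = 1 and γ''(t) = γ(t) for all t. -/
/-!
Both `γ` and `gammaGeoD` have the form `e^t P ± e^{-t} Q` for fixed matrices `P`, `Q`, so each is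
the derivative of the other. Since `X * adj X = det X • 1`, the Minkowski norm `⟨X, X⟩` is `-det X`.
The matrices `P`, `Q` have rank one, so in `det γ'` only the cross term survives; it equals
`-e^t e^{-t} |1 + μ1 μ̄2|²`, and the normalising factor turns it into `-1`.
-/

open Matrix

/-- The t-derivative of `gammaGeo`. -/
noncomputable def gammaGeoD (μ1 μ2 : ℂ) (t : ℝ) : Matrix (Fin 2) (Fin 2) ℂ :=
  (1 / (‖1 + μ1 * star μ2‖ : ℂ)) •
    !![(Real.exp t : ℂ) - (Real.exp (-t) : ℂ) * (‖μ1‖^2 : ℝ),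
       (Real.exp t : ℂ) * μ2 + (Real.exp (-t) : ℂ) * μ1;
       (Real.exp t : ℂ) * star μ2 + (Real.exp (-t) : ℂ) * star μ1,
       (Real.exp t : ℂ) * (‖μ2‖^2 : ℝ) - (Real.exp (-t) : ℂ)]

noncomputable def expCombo {m n : Type*} (A B : Matrix m n ℂ) (t : ℝ) : Matrix m n ℂ :=
  (Real.exp t : ℂ) • A + (Real.exp (-t) : ℂ) • B

theorem hasDerivAt_expCombo_apply {m n : Type*} (A B : Matrix m n ℂ) (t : ℝ) (i : m) (j : n) :
    HasDerivAt (fun u => expCombo A B u i j) (expCombo A (-B) t i j) t := by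
  have hexp : HasDerivAt (fun u : ℝ => (Real.exp u : ℂ)) (Real.exp t : ℂ) t :=
    (Real.hasDerivAt_exp t).ofReal_comp
  have hexp_neg : HasDerivAt (fun u : ℝ => (Real.exp (-u) : ℂ)) (-Real.exp (-t) : ℂ) t := by
    simpa using ((Real.hasDerivAt_exp (-t)).comp t (hasDerivAt_neg t)).ofReal_comp
  simp only [expCombo, Matrix.add_apply, Matrix.smul_apply, smul_eq_mul, Matrix.neg_apply]
  exact ((hexp.mul_const (A i j)).fun_add (hexp_neg.mul_const (B i j))).congr_deriv (by ring)

theorem trace_mul_adjugate {n R : Type*} [Fintype n] [DecidableEq n] [CommRing R]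
    (M : Matrix n n R) : (M * M.adjugate).trace = Fintype.card n * M.det := by
  rw [mul_adjugate, trace_smul, trace_one, smul_eq_mul, mul_comm]

section gammaGeo

variable (μ1 μ2 : ℂ)

noncomputable def gammaGeoPos : Matrix (Fin 2) (Fin 2) ℂ :=
  (1 / (‖1 + μ1 * star μ2‖ : ℂ)) • !![1, μ2; star μ2, ((‖μ2‖ ^ 2 : ℝ) : ℂ)]

noncomputable def gammaGeoNeg : Matrix (Fin 2) (Fin 2) ℂ :=
  (1 / (‖1 + μ1 * star μ2‖ : ℂ)) • !![((‖μ1‖ ^ 2 : ℝ) : ℂ), -μ1; -star μ1, 1]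

theorem gammaGeo_eq_expCombo :
    gammaGeo μ1 μ2 = expCombo (gammaGeoPos μ1 μ2) (gammaGeoNeg μ1 μ2) := by
  ext t i j
  fin_cases i <;> fin_cases j <;>
    simp only [gammaGeo, expCombo, gammaGeoPos, gammaGeoNeg, Matrix.add_apply, Matrix.smul_apply,
      of_apply, cons_val', cons_val_zero, cons_val_one, cons_val_fin_one,
      Fin.zero_eta, Fin.mk_one, smul_eq_mul] <;> ring

theorem gammaGeoD_eq_expCombo :
    gammaGeoD μ1 μ2 = expCombo (gammaGeoPos μ1 μ2) (-gammaGeoNeg μ1 μ2) := by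
  ext t i j
  fin_cases i <;> fin_cases j <;>
    simp only [gammaGeoD, expCombo, gammaGeoPos, gammaGeoNeg, Matrix.add_apply, Matrix.smul_apply,
      Matrix.neg_apply, of_apply, cons_val', cons_val_zero, cons_val_one, cons_val_fin_one,
      Fin.zero_eta, Fin.mk_one, smul_eq_mul] <;> ring

theorem det_gammaGeoD (h : 1 + μ1 * star μ2 ≠ 0) (t : ℝ) : (gammaGeoD μ1 μ2 t).det = -1 := by
  have hexp : (Real.exp t : ℂ) * Real.exp (-t) = 1 := by
    rw [← Complex.ofReal_mul, ← Real.exp_add, add_neg_cancel, Real.exp_zero, Complex.ofReal_one]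
  have hconj : starRingEnd ℂ (1 + μ1 * star μ2) ≠ 0 := (map_ne_zero _).mpr h
  rw [gammaGeoD, det_smul, det_fin_two_of, Fintype.card_fin, div_pow, one_pow,
    Complex.ofReal_pow, Complex.ofReal_pow, ← Complex.mul_conj', ← Complex.mul_conj',
    ← Complex.mul_conj']
  simp only [Complex.star_def, map_add, map_one, map_mul, Complex.conj_conj] at h hconj ⊢
  field_simp
  linear_combination (-(1 + μ2 * starRingEnd ℂ μ1) * (1 + μ1 * starRingEnd ℂ μ2)) * hexp

end gammaGeo

theorem stmt_6 (μ1 μ2 : ℂ) (h : 1 + μ1 * star μ2 ≠ 0) (t : ℝ) :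
    (∀ i j, HasDerivAt (fun u => gammaGeo μ1 μ2 u i j) (gammaGeoD μ1 μ2 t i j) t) ∧
    (∀ i j, HasDerivAt (fun u => gammaGeoD μ1 μ2 u i j) (gammaGeo μ1 μ2 t i j) t) ∧
    -(1/2 : ℂ) * ((gammaGeoD μ1 μ2 t) * (gammaGeoD μ1 μ2 t).adjugate).trace = 1 := by
  refine ⟨fun i j => ?_, fun i j => ?_, ?_⟩
  · rw [gammaGeo_eq_expCombo, gammaGeoD_eq_expCombo]
    exact hasDerivAt_expCombo_apply _ _ t i j
  · rw [gammaGeo_eq_expCombo, gammaGeoD_eq_expCombo]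
    simpa only [neg_neg] using
      hasDerivAt_expCombo_apply (gammaGeoPos μ1 μ2) (-gammaGeoNeg μ1 μ2) t i j
  · rw [trace_mul_adjugate, det_gammaGeoD μ1 μ2 h t]
    norm_num
end

section
/- Let α(s) = (μ1(s), μ2(s)) be a C¹ curve in ℂ² with 1 + μ1(s)μ̄2(s) ≠ 0 and α'(s) ≠ 0 for all s. Suppose Im(μ1'(s)μ̄2'(s)/(1+μ1(s)μ̄2(s))²) = 0 and Re(μ1'(s)μ̄2'(s)/(1+μ1(s)μ̄2(s))²) = 0 for all s (i.e. α is null for both G^i and G^r). Then at each s, μ1'(s) = 0 or μ2'(s) = 0, and the zero sets of μ1' and μ2' are open; hence if μ1' is not 0 at some point of a connected component of the domain, then μ2' vanishes identically on that component. -/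
theorem stmt_10 (μ1 μ2 d1 d2 : ℝ → ℂ)
    (hd1 : ∀ s, HasDerivAt μ1 (d1 s) s) (hd2 : ∀ s, HasDerivAt μ2 (d2 s) s)
    (hc1 : Continuous d1) (hc2 : Continuous d2)
    (hden : ∀ s, 1 + μ1 s * star (μ2 s) ≠ 0)
    (hreg : ∀ s, ¬(d1 s = 0 ∧ d2 s = 0))
    (hGi : ∀ s, (d1 s * star (d2 s) / (1 + μ1 s * star (μ2 s))^2).im = 0)
    (hGr : ∀ s, (d1 s * star (d2 s) / (1 + μ1 s * star (μ2 s))^2).re = 0) :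
    (∀ s, d1 s = 0 ∨ d2 s = 0) ∧
    IsOpen {s | d1 s = 0} ∧ IsOpen {s | d2 s = 0} ∧
    ((∃ s, d1 s ≠ 0) → ∀ s, d2 s = 0) := by
  have key : ∀ s, d1 s = 0 ∨ d2 s = 0 := by
    intro s
    have hq : d1 s * star (d2 s) / (1 + μ1 s * star (μ2 s)) ^ 2 = 0 :=
      Complex.ext (hGr s) (hGi s)
    have hden2 : (1 + μ1 s * star (μ2 s)) ^ 2 ≠ 0 := pow_ne_zero _ (hden s)
    have hmul := (div_eq_zero_iff.mp hq).resolve_right hden2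
    rcases mul_eq_zero.mp hmul with h | h
    · exact Or.inl h
    · exact Or.inr (by simpa using h)
  have ho1 : IsOpen {s | d1 s = 0} := by
    rw [isOpen_iff_mem_nhds]
    intro s hs
    have h2 : d2 s ≠ 0 := fun h => hreg s ⟨hs, h⟩
    filter_upwards [hc2.continuousAt.eventually_ne h2] with t ht
    exact (key t).resolve_right ht
  have ho2 : IsOpen {s | d2 s = 0} := by
    rw [isOpen_iff_mem_nhds]
    intro s hs
    have h1 : d1 s ≠ 0 := fun h => hreg s ⟨h, hs⟩
    filter_upwards [hc1.continuousAt.eventually_ne h1] with t ht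
    exact (key t).resolve_left ht
  refine ⟨key, ho1, ho2, ?_⟩
  rintro ⟨s0, hs0⟩ s
  have hcompl : {s | d1 s = 0}ᶜ = {s | d2 s = 0} := by
    ext t
    simp only [Set.mem_compl_iff, Set.mem_setOf_eq]
    exact ⟨fun h => (key t).resolve_left h, fun h h1 => hreg t ⟨h1, h⟩⟩
  have hclopen : IsClopen {s | d1 s = 0} :=
    ⟨isOpen_compl_iff.mp (hcompl ▸ ho2), ho1⟩
  rcases isClopen_iff.mp hclopen with h | h
  · have : d1 s ∉ ({} : Set ℂ) := by simp
    have hs1 : d1 s ≠ 0 := fun hz => by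
      have : s ∈ {s | d1 s = 0} := hz
      rw [h] at this; exact this
    exact (key s).resolve_left hs1
  · exact absurd (h ▸ Set.mem_univ s0 : s0 ∈ {s | d1 s = 0}) hs0
end

section
/- Let α(s) = (μ1(s), μ2(s)) be a regular C¹ curve in ℂ² with 1+μ1μ̄2 ≠ 0. If G^i(α',α') = 0 and G^r(α',α') > 0 at some s0, then, setting c = 4|μ1'(s0)||μ2'(s0)|/|1+μ1(s0)μ̄2(s0)|², one has G^r(α'(s0),α'(s0)) = c and Λ(s0,t) = c·sinh²(t + (1/2)log(|μ2'(s0)|/|μ1'(s0)|)); in particular Λ(s0, t0) = 0 for t0 = (log|μ1'(s0)| - log|μ2'(s0)|)/2. -/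
/-! A nonnegative real complex number equals its norm, so `G^r = ‖G‖ = 4|μ1'||μ2'|/|1+μ1μ̄2|²`.
Substituting this into `Λ` gives `(e^{2t}|μ2'|² + e^{-2t}|μ1'|² - 2|μ1'||μ2'|)/|1+μ1μ̄2|²`, and with
`a = |μ1'|`, `b = |μ2'|` the numerator is `(e^t b - e^{-t} a)² = 4ab sinh²(t + ½ log(b/a))`. -/

/-- The squared area element Λ of the ruled surface generated by a geodesic
congruence, at a point with coordinates (m1, m2) and velocity (d1, d2). -/
noncomputable def Lam (m1 m2 d1 d2 : ℂ) (t : ℝ) : ℝ :=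
  (Real.exp (2*t) * ‖d2‖^2 + Real.exp (-(2*t)) * ‖d1‖^2) /
      ‖1 + m1 * star m2‖^2
    - (1/2) * (4 * d1 * star d2 / (1 + m1 * star m2)^2).re

open Real
open scoped ComplexOrder

lemma Real.sinh_sq_eq (x : ℝ) : sinh x ^ 2 = (exp (2 * x) + exp (-(2 * x)) - 2) / 4 := by
  have hcosh : cosh (2 * x) = 1 + 2 * sinh x ^ 2 := by
    rw [cosh_two_mul, cosh_sq]; ring
  have : sinh x ^ 2 = (cosh (2 * x) - 1) / 2 := by linarith
  rw [this, cosh_eq]; ring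

lemma Real.four_mul_mul_sinh_add_half_log_div_sq {a b : ℝ} (ha : 0 < a) (hb : 0 < b) (t : ℝ) :
    4 * a * b * sinh (t + 1 / 2 * log (b / a)) ^ 2 =
      exp (2 * t) * b ^ 2 + exp (-(2 * t)) * a ^ 2 - 2 * a * b := by
  have hplus : exp (2 * (t + 1 / 2 * log (b / a))) = exp (2 * t) * (b / a) := by
    rw [show 2 * (t + 1 / 2 * log (b / a)) = 2 * t + log (b / a) by ring,
      exp_add, exp_log (by positivity)]
  have hminus : exp (-(2 * (t + 1 / 2 * log (b / a)))) = exp (-(2 * t)) * (a / b) := by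
    rw [show -(2 * (t + 1 / 2 * log (b / a))) = -(2 * t) + log (a / b) by
        rw [log_div hb.ne' ha.ne', log_div ha.ne' hb.ne']; ring,
      exp_add, exp_log (by positivity)]
  rw [sinh_sq_eq, hplus, hminus]
  field_simp

lemma Complex.norm_four_mul_mul_star_div_sq (d1 d2 w : ℂ) :
    ‖4 * d1 * star d2 / w ^ 2‖ = 4 * ‖d1‖ * ‖d2‖ / ‖w‖ ^ 2 := by
  simp [norm_pow]

lemma Lam_eq_of_re_eq (m1 m2 d1 d2 : ℂ) (t : ℝ)
    (hre : (4 * d1 * star d2 / (1 + m1 * star m2) ^ 2).re =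
      4 * ‖d1‖ * ‖d2‖ / ‖1 + m1 * star m2‖ ^ 2) :
    Lam m1 m2 d1 d2 t =
      (exp (2 * t) * ‖d2‖ ^ 2 + exp (-(2 * t)) * ‖d1‖ ^ 2 - 2 * ‖d1‖ * ‖d2‖) /
        ‖1 + m1 * star m2‖ ^ 2 := by
  rw [Lam, hre]; ring

theorem stmt_13_general (m1 m2 d1 d2 : ℂ)
    (hGi : (4 * d1 * star d2 / (1 + m1 * star m2)^2).im = 0)
    (hGr : 0 < (4 * d1 * star d2 / (1 + m1 * star m2)^2).re) :
    (4 * d1 * star d2 / (1 + m1 * star m2)^2).re =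
        4 * ‖d1‖ * ‖d2‖ / ‖1 + m1 * star m2‖^2 ∧
    (∀ t, Lam m1 m2 d1 d2 t =
        (4 * ‖d1‖ * ‖d2‖ / ‖1 + m1 * star m2‖^2) *
          Real.sinh (t + (1/2) * Real.log (‖d2‖ / ‖d1‖))^2) ∧
    Lam m1 m2 d1 d2 ((Real.log (‖d1‖) - Real.log (‖d2‖)) / 2) = 0 := by
  have hG_nonneg : 0 ≤ 4 * d1 * star d2 / (1 + m1 * star m2) ^ 2 :=
    Complex.nonneg_iff.mpr ⟨hGr.le, hGi.symm⟩
  have hre := (Complex.re_eq_norm.mpr hG_nonneg).trans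
    (Complex.norm_four_mul_mul_star_div_sq d1 d2 _)
  have hd1 : 0 < ‖d1‖ := norm_pos_iff.mpr (by rintro rfl; simp at hGr)
  have hd2 : 0 < ‖d2‖ := norm_pos_iff.mpr (by rintro rfl; simp at hGr)
  have hLam : ∀ t, Lam m1 m2 d1 d2 t =
      (4 * ‖d1‖ * ‖d2‖ / ‖1 + m1 * star m2‖ ^ 2) *
        sinh (t + 1 / 2 * log (‖d2‖ / ‖d1‖)) ^ 2 := by
    intro t
    rw [Lam_eq_of_re_eq m1 m2 d1 d2 t hre, div_mul_eq_mul_div,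
      four_mul_mul_sinh_add_half_log_div_sq hd1 hd2]
  refine ⟨hre, hLam, ?_⟩
  rw [hLam, log_div hd2.ne' hd1.ne',
    show (log ‖d1‖ - log ‖d2‖) / 2 + 1 / 2 * (log ‖d2‖ - log ‖d1‖) = 0 by ring]
  simp

theorem stmt_13 (m1 m2 d1 d2 : ℂ) (hden : 1 + m1 * star m2 ≠ 0)
    (hreg : ¬(d1 = 0 ∧ d2 = 0))
    (hGi : (4 * d1 * star d2 / (1 + m1 * star m2)^2).im = 0)
    (hGr : 0 < (4 * d1 * star d2 / (1 + m1 * star m2)^2).re) :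
    (4 * d1 * star d2 / (1 + m1 * star m2)^2).re =
        4 * ‖d1‖ * ‖d2‖ / ‖1 + m1 * star m2‖^2 ∧
    (∀ t, Lam m1 m2 d1 d2 t =
        (4 * ‖d1‖ * ‖d2‖ / ‖1 + m1 * star m2‖^2) *
          Real.sinh (t + (1/2) * Real.log (‖d2‖ / ‖d1‖))^2) ∧
    Lam m1 m2 d1 d2 ((Real.log (‖d1‖) - Real.log (‖d2‖)) / 2) = 0 :=
  stmt_13_general m1 m2 d1 d2 hGi hGr
end
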